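/- Let w : ℝ × [0,π] → ℝ be twice continuously differentiable with ∂²w/∂x² + ∂²w/∂t² + w = 0 on the strip. Assume the functions x ↦ w(x,0) and x ↦ w(x,π) are integrable on ℝ, and that there exist continuous functions w_x^± : [0,π] → ℝ such that (∂w/∂x)(x,t) → w_x^+(t) uniformly in t as x → +∞ and (∂w/∂x)(x,t) → w_x^−(t) uniformly in t as x → −∞. Then ∫_{−∞}^{∞} ( w(x,π) + w(x,0) ) dx + ∫₀^{π} sin t · ( w_x^+(t) − w_x^−(t) ) dt = 0. -/

import Mathlib

open MeasureTheory Filter Topology Set Real Function intervalIntegral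

/-!
Multiply the Jacobi equation by `sin t`, the Dirichlet eigenfunction of `∂ₜ² + 1` on `[0, π]`,
and integrate over the rectangle `[a, b] × [0, π]`. Integrating by parts twice in `t` turns
`∫ sin t (w_tt + w) dt` into the boundary values `w(x, π) + w(x, 0)`, while integrating `w_xx`
in `x` leaves `w_x(b, t) - w_x(a, t)`. Hence
`∫_a^b (w(x, π) + w(x, 0)) dx = -∫_0^π sin t (w_x(b, t) - w_x(a, t)) dt`, and letting
`a → -∞`, `b → ∞` gives the claim: the left side by integrability of the boundary values, the
right side by the uniform convergence of `w_x`.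
-/

theorem TendstoUniformlyOn.comp_tendsto {ι ι' α β : Type*} [UniformSpace β]
    {F : ι → α → β} {f : α → β} {p : Filter ι} {q : Filter ι'} {s : Set α} {φ : ι' → ι}
    (h : TendstoUniformlyOn F f p s) (hφ : Tendsto φ q p) :
    TendstoUniformlyOn (fun i => F (φ i)) f q s := by
  rw [tendstoUniformlyOn_iff_tendsto] at h ⊢
  exact h.comp (hφ.prodMap tendsto_id)

theorem TendstoUniformlyOn.mul_left_of_abs_le {ι α : Type*} {F : ι → α → ℝ} {f g : α → ℝ}
    {p : Filter ι} {s : Set α} {C : ℝ} (h : TendstoUniformlyOn F f p s)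
    (hg : ∀ x ∈ s, |g x| ≤ C) :
    TendstoUniformlyOn (fun i x => g x * F i x) (fun x => g x * f x) p s := by
  rw [Metric.tendstoUniformlyOn_iff] at h ⊢
  intro ε hε
  have hC : 0 < |C| + 1 := by positivity
  filter_upwards [h (ε / (|C| + 1)) (div_pos hε hC)] with i hi x hx
  have hgx : |g x| ≤ |C| := (hg x hx).trans (le_abs_self C)
  calc dist (g x * f x) (g x * F i x) = |g x| * dist (f x) (F i x) := by
        rw [Real.dist_eq, Real.dist_eq, ← mul_sub, abs_mul]
    _ ≤ |C| * (ε / (|C| + 1)) := by gcongr; exact (hi x hx).le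
    _ < (|C| + 1) * (ε / (|C| + 1)) := by gcongr; linarith
    _ = ε := mul_div_cancel₀ ε hC.ne'

/-- Green's identity on `[0, π]` for `u'' + u = -g` against `sin`, which solves `φ'' + φ = 0`
with `φ 0 = φ π = 0`, `φ' 0 = 1`, `φ' π = -1`. -/
theorem integral_sin_mul_eq_of_hasDerivAt {u u' g : ℝ → ℝ}
    (hu : ContinuousOn u (Icc 0 π)) (hu' : ContinuousOn u' (Icc 0 π))
    (hdu : ∀ t ∈ Ioo 0 π, HasDerivAt u (u' t) t)
    (hdu' : ∀ t ∈ Ioo 0 π, HasDerivAt u' (-(u t + g t)) t)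
    (hg : IntervalIntegrable g volume 0 π) :
    ∫ t in 0..π, sin t * g t = -(u π + u 0) := by
  have hderiv : ∀ t ∈ Ioo 0 π,
      HasDerivAt (fun t => sin t * u' t - cos t * u t) (-(sin t * g t)) t := fun t ht => by
    refine (((hasDerivAt_sin t).mul (hdu' t ht)).sub
      ((hasDerivAt_cos t).mul (hdu t ht))).congr_deriv ?_
    ring
  have hcont : ContinuousOn (fun t => sin t * u' t - cos t * u t) (Icc 0 π) :=
    (continuous_sin.continuousOn.mul hu').sub (continuous_cos.continuousOn.mul hu)
  have := integral_eq_sub_of_hasDerivAt_of_le pi_pos.le hcont hderiv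
    (hg.continuousOn_mul continuous_sin.continuousOn).neg
  simp only [intervalIntegral.integral_neg, sin_pi, cos_pi, sin_zero, cos_zero] at this
  linarith

section Slices

variable {G : Type*} [NormedAddCommGroup G] [NormedSpace ℝ G] {f : ℝ × ℝ → G}
  {f' : ℝ × ℝ →L[ℝ] G} {s : Set (ℝ × ℝ)} {x t : ℝ}

theorem HasFDerivWithinAt.hasDerivAt_slice_fst (hf : HasFDerivWithinAt f f' s (x, t))
    (hs : ∀ a, (a, t) ∈ s) : HasDerivAt (fun a => f (a, t)) (f' (1, 0)) x := by
  have hline : HasDerivAt (fun a : ℝ => (a, t)) ((1 : ℝ), (0 : ℝ)) x :=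
    (hasDerivAt_id x).prodMk (hasDerivAt_const x t)
  rw [← hasDerivWithinAt_univ]
  exact hf.comp_hasDerivWithinAt x hline.hasDerivWithinAt fun a _ => hs a

theorem HasFDerivAt.hasDerivAt_slice_snd (hf : HasFDerivAt f f' (x, t)) :
    HasDerivAt (fun b => f (x, b)) (f' (0, 1)) t :=
  hf.comp_hasDerivAt t ((hasDerivAt_const t x).prodMk (hasDerivAt_id t))

end Slices

abbrev strip : Set (ℝ × ℝ) := univ ×ˢ Icc 0 π

/-- Derivatives are taken within the closed strip, so that `t`-derivatives exist up to the
boundary lines, where `deriv` would depend on values of `f` outside the strip. -/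
noncomputable def stripPartial (v : ℝ × ℝ) (f : ℝ × ℝ → ℝ) (p : ℝ × ℝ) : ℝ :=
  fderivWithin ℝ f strip p v

local notation "∂ₓ" => stripPartial (1, 0)
local notation "∂ₜ" => stripPartial (0, 1)

section StripPartial

variable {f : ℝ × ℝ → ℝ} {t : ℝ}

theorem uniqueDiffOn_strip : UniqueDiffOn ℝ strip :=
  uniqueDiffOn_univ.prod (uniqueDiffOn_Icc pi_pos)

theorem ContinuousOn.comp_stripSlice (hf : ContinuousOn f strip) (x : ℝ) :
    ContinuousOn (fun t => f (x, t)) (Icc 0 π) :=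
  hf.comp (Continuous.continuousOn (by fun_prop)) fun _ ht => ⟨trivial, ht⟩

theorem ContDiffOn.stripPartial {m n : WithTop ℕ∞} (hf : ContDiffOn ℝ n f strip)
    (hmn : m + 1 ≤ n) (v : ℝ × ℝ) : ContDiffOn ℝ m (stripPartial v f) strip :=
  (hf.fderivWithin uniqueDiffOn_strip hmn).clm_apply contDiffOn_const

theorem ContDiffOn.hasDerivAt_stripPartial_fst (hf : ContDiffOn ℝ 1 f strip)
    (ht : t ∈ Icc 0 π) (x : ℝ) : HasDerivAt (fun a => f (a, t)) (∂ₓ f (x, t)) x :=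
  (hf.differentiableOn one_ne_zero _ ⟨trivial, ht⟩).hasFDerivWithinAt.hasDerivAt_slice_fst
    fun _ => ⟨trivial, ht⟩

theorem ContDiffOn.hasDerivAt_stripPartial_snd (hf : ContDiffOn ℝ 1 f strip) (x : ℝ)
    (ht : t ∈ Ioo 0 π) : HasDerivAt (fun b => f (x, b)) (∂ₜ f (x, t)) t := by
  have hmem : (x, t) ∈ strip := ⟨trivial, Ioo_subset_Icc_self ht⟩
  exact ((hf.differentiableOn one_ne_zero _ hmem).hasFDerivWithinAt.hasFDerivAt
    (prod_mem_nhds univ_mem (Icc_mem_nhds ht.1 ht.2))).hasDerivAt_slice_snd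

end StripPartial

section JacobiField

variable {w : ℝ → ℝ → ℝ}

theorem stripPartial_jacobi_eq_zero (hreg : ContDiffOn ℝ 2 (uncurry w) strip)
    (hpde : ∀ x : ℝ, ∀ t ∈ Ioo (0 : ℝ) π,
      deriv (fun a => deriv (fun b => w b t) a) x
        + deriv (fun a => deriv (fun b => w x b) a) t + w x t = 0) :
    ∀ x : ℝ, ∀ t ∈ Ioo (0 : ℝ) π,
      ∂ₓ (∂ₓ (uncurry w)) (x, t) + ∂ₜ (∂ₜ (uncurry w)) (x, t) + w x t = 0 := by
  intro x t ht
  have hw : ContDiffOn ℝ 1 (uncurry w) strip := hreg.of_le (by norm_num)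
  have hwx : ContDiffOn ℝ 1 (∂ₓ (uncurry w)) strip := hreg.stripPartial (by norm_num) _
  have hwt : ContDiffOn ℝ 1 (∂ₜ (uncurry w)) strip := hreg.stripPartial (by norm_num) _
  have hxx : deriv (fun a => deriv (fun b => w b t) a) x = ∂ₓ (∂ₓ (uncurry w)) (x, t) := by
    have hIcc := Ioo_subset_Icc_self ht
    have : (fun a => deriv (fun b => w b t) a) = fun a => ∂ₓ (uncurry w) (a, t) :=
      funext fun a => (hw.hasDerivAt_stripPartial_fst hIcc a).deriv
    rw [this]
    exact (hwx.hasDerivAt_stripPartial_fst hIcc x).deriv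
  have htt : deriv (fun a => deriv (fun b => w x b) a) t = ∂ₜ (∂ₜ (uncurry w)) (x, t) := by
    have : (fun a => deriv (fun b => w x b) a) =ᶠ[𝓝 t] fun a => ∂ₜ (uncurry w) (x, a) := by
      filter_upwards [Ioo_mem_nhds ht.1 ht.2] with a ha
      exact (hw.hasDerivAt_stripPartial_snd x ha).deriv
    rw [this.deriv_eq]
    exact (hwt.hasDerivAt_stripPartial_snd x ht).deriv
  rw [← hxx, ← htt]
  exact hpde x t ht

theorem integral_sin_mul_stripPartial_fst_fst (hreg : ContDiffOn ℝ 2 (uncurry w) strip)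
    (hjac : ∀ x : ℝ, ∀ t ∈ Ioo (0 : ℝ) π,
      ∂ₓ (∂ₓ (uncurry w)) (x, t) + ∂ₜ (∂ₜ (uncurry w)) (x, t) + w x t = 0) (x : ℝ) :
    ∫ t in 0..π, sin t * ∂ₓ (∂ₓ (uncurry w)) (x, t) = -(w x π + w x 0) := by
  have hwx : ContDiffOn ℝ 1 (∂ₓ (uncurry w)) strip := hreg.stripPartial (by norm_num) _
  have hwt : ContDiffOn ℝ 1 (∂ₜ (uncurry w)) strip := hreg.stripPartial (by norm_num) _
  have hwxx : ContinuousOn (∂ₓ (∂ₓ (uncurry w))) strip :=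
    (hwx.stripPartial (m := 0) (by norm_num) _).continuousOn
  refine integral_sin_mul_eq_of_hasDerivAt (u := fun t => w x t)
    (hreg.continuousOn.comp_stripSlice x) (hwt.continuousOn.comp_stripSlice x)
    (fun t ht => (hreg.of_le (by norm_num)).hasDerivAt_stripPartial_snd x ht)
    (fun t ht => (hwt.hasDerivAt_stripPartial_snd x ht).congr_deriv ?_) ?_
  · linarith [hjac x t ht]
  · exact (hwxx.comp_stripSlice x).intervalIntegrable_of_Icc pi_pos.le

theorem integral_boundary_eq_neg_integral_sin_mul (hreg : ContDiffOn ℝ 2 (uncurry w) strip)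
    (hjac : ∀ x : ℝ, ∀ t ∈ Ioo (0 : ℝ) π,
      ∂ₓ (∂ₓ (uncurry w)) (x, t) + ∂ₜ (∂ₜ (uncurry w)) (x, t) + w x t = 0) (a b : ℝ) :
    ∫ x in a..b, (w x π + w x 0)
      = -∫ t in 0..π, sin t * (∂ₓ (uncurry w) (b, t) - ∂ₓ (uncurry w) (a, t)) := by
  have hwx : ContDiffOn ℝ 1 (∂ₓ (uncurry w)) strip := hreg.stripPartial (by norm_num) _
  have hwxx : ContinuousOn (∂ₓ (∂ₓ (uncurry w))) strip :=
    (hwx.stripPartial (m := 0) (by norm_num) _).continuousOn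
  have hint : IntegrableOn (uncurry fun x t => sin t * ∂ₓ (∂ₓ (uncurry w)) (x, t))
      (uIoc a b ×ˢ uIoc 0 π) := by
    have hK : uIcc a b ×ˢ Icc 0 π ⊆ strip := prod_mono (subset_univ _) subset_rfl
    refine (((continuous_sin.comp continuous_snd).continuousOn.mul hwxx).mono hK
      |>.integrableOn_compact (isCompact_uIcc.prod isCompact_Icc)).mono_set ?_
    rw [uIoc_of_le pi_pos.le]
    exact prod_mono uIoc_subset_uIcc Ioc_subset_Icc_self
  have hftc : ∀ t ∈ uIcc 0 π, ∫ x in a..b, ∂ₓ (∂ₓ (uncurry w)) (x, t)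
      = ∂ₓ (uncurry w) (b, t) - ∂ₓ (uncurry w) (a, t) := fun t ht => by
    rw [uIcc_of_le pi_pos.le] at ht
    exact integral_eq_sub_of_hasDerivAt (fun x _ => hwx.hasDerivAt_stripPartial_fst ht x)
      ((hwxx.comp_continuous (by fun_prop) fun _ => ⟨trivial, ht⟩).intervalIntegrable _ _)
  calc ∫ x in a..b, (w x π + w x 0)
      = ∫ x in a..b, -∫ t in 0..π, sin t * ∂ₓ (∂ₓ (uncurry w)) (x, t) := by
        simp only [integral_sin_mul_stripPartial_fst_fst hreg hjac, neg_neg]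
    _ = -∫ t in 0..π, ∫ x in a..b, sin t * ∂ₓ (∂ₓ (uncurry w)) (x, t) := by
        rw [intervalIntegral.integral_neg, intervalIntegral_intervalIntegral_swap hint]
    _ = -∫ t in 0..π, sin t * (∂ₓ (uncurry w) (b, t) - ∂ₓ (uncurry w) (a, t)) := by
        congr 1
        refine integral_congr fun t ht => ?_
        simp only [intervalIntegral.integral_const_mul, hftc t ht]

end JacobiField

theorem moment_condition_general (w : ℝ → ℝ → ℝ)
    (hreg : ContDiffOn ℝ 2 (fun p : ℝ × ℝ => w p.1 p.2)
      (Set.univ ×ˢ Set.Icc 0 Real.pi))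
    (hpde : ∀ x : ℝ, ∀ t ∈ Set.Ioo (0 : ℝ) Real.pi,
      deriv (fun a => deriv (fun b => w b t) a) x
        + deriv (fun a => deriv (fun b => w x b) a) t
        + w x t = 0)
    (hint0 : Integrable (fun x : ℝ => w x 0))
    (hintpi : Integrable (fun x : ℝ => w x Real.pi))
    (wxp wxm : ℝ → ℝ)
    (hlimp : TendstoUniformlyOn (fun x t => deriv (fun a => w a t) x) wxp
      atTop (Set.Icc 0 Real.pi))
    (hlimm : TendstoUniformlyOn (fun x t => deriv (fun a => w a t) x) wxm
      atBot (Set.Icc 0 Real.pi)) :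
    (∫ x : ℝ, (w x Real.pi + w x 0))
      + (∫ t in (0 : ℝ)..Real.pi, Real.sin t * (wxp t - wxm t)) = 0 := by
  have hjac := stripPartial_jacobi_eq_zero hreg hpde
  have hwx : ContinuousOn (∂ₓ (uncurry w)) strip :=
    (hreg.stripPartial (m := 0) (by norm_num) _).continuousOn
  have hderiv : ∀ r, ∀ t ∈ Icc 0 π, deriv (fun a => w a t) r = ∂ₓ (uncurry w) (r, t) :=
    fun r t ht => ((hreg.of_le (by norm_num)).hasDerivAt_stripPartial_fst ht r).deriv
  have hunif : TendstoUniformlyOn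
      (fun p : ℝ × ℝ => fun t => sin t * (∂ₓ (uncurry w) (p.2, t) - ∂ₓ (uncurry w) (p.1, t)))
      (fun t => sin t * (wxp t - wxm t)) (atBot ×ˢ atTop) (uIcc 0 π) := by
    rw [uIcc_of_le pi_pos.le]
    refine (((hlimp.comp_tendsto tendsto_snd).sub (hlimm.comp_tendsto tendsto_fst)).congr
      (.of_forall fun p t ht => by simp [hderiv _ t ht])).mul_left_of_abs_le
      fun t _ => abs_sin_le_one t
  have hrhs := hunif.tendsto_intervalIntegral_of_continuousOn (μ := volume) <|
    .of_forall fun p => by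
      rw [uIcc_of_le pi_pos.le]
      exact continuous_sin.continuousOn.mul
        ((hwx.comp_stripSlice p.2).sub (hwx.comp_stripSlice p.1))
  have hlhs : Tendsto (fun p : ℝ × ℝ => ∫ x in p.1..p.2, (w x π + w x 0)) (atBot ×ˢ atTop)
      (𝓝 (∫ x, (w x π + w x 0))) :=
    intervalIntegral_tendsto_integral (hintpi.add hint0) tendsto_fst tendsto_snd
  have := tendsto_nhds_unique hlhs <| hrhs.neg.congr fun p =>
    (integral_boundary_eq_neg_integral_sin_mul hreg hjac p.1 p.2).symm
  linarith

/-- The moment condition for well-behaved Jacobi fields on the parabolic catenoid: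
if `w` is `C²` on the strip `ℝ × [0,π]`, satisfies `w_{xx} + w_{tt} + w = 0`, its
boundary values are integrable, and `∂w/∂x` converges uniformly in `t` to continuous
limits `w_x^±` as `x → ±∞`, then
`∫_ℝ (w(x,π) + w(x,0)) dx + ∫₀^π sin t (w_x^+(t) - w_x^-(t)) dt = 0`. -/
theorem moment_condition (w : ℝ → ℝ → ℝ)
    (hreg : ContDiffOn ℝ 2 (fun p : ℝ × ℝ => w p.1 p.2)
      (Set.univ ×ˢ Set.Icc 0 Real.pi))
    (hpde : ∀ x : ℝ, ∀ t ∈ Set.Ioo (0 : ℝ) Real.pi,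
      deriv (fun a => deriv (fun b => w b t) a) x
        + deriv (fun a => deriv (fun b => w x b) a) t
        + w x t = 0)
    (hint0 : Integrable (fun x : ℝ => w x 0))
    (hintpi : Integrable (fun x : ℝ => w x Real.pi))
    (wxp wxm : ℝ → ℝ)
    (hwxp : ContinuousOn wxp (Set.Icc 0 Real.pi))
    (hwxm : ContinuousOn wxm (Set.Icc 0 Real.pi))
    (hlimp : TendstoUniformlyOn (fun x t => deriv (fun a => w a t) x) wxp
      atTop (Set.Icc 0 Real.pi))
    (hlimm : TendstoUniformlyOn (fun x t => deriv (fun a => w a t) x) wxm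
      atBot (Set.Icc 0 Real.pi)) :
    (∫ x : ℝ, (w x Real.pi + w x 0))
      + (∫ t in (0 : ℝ)..Real.pi, Real.sin t * (wxp t - wxm t)) = 0 :=
  moment_condition_general w hreg hpde hint0 hintpi wxp wxm hlimp hlimm
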